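/- For every ℓ with 0 < ℓ < 1, the low-pass filtered increment of Riemann's non-differentiable function at frequency cutoff ℓ⁻¹/2 satisfies ‖I_{≤ℓ⁻¹/2}(ℓ)‖_{L⁴(𝕋)}⁴ ≤ ‖I(ℓ)‖_{L⁴(𝕋)}⁴ = S₄(ℓ). (This uses that the Fourier coefficients 2i·sin(πkℓ)σ_k/k of I(ℓ) have nonnegative imaginary part for all 1 ≤ k ≤ ℓ⁻¹.) -/

import Mathlib

open Real MeasureTheory

/-- `σ k = 1` if `k` is a perfect square, `0` otherwise. -/
noncomputable def sqIndicator (k : ℕ) : ℝ := if IsSquare k then 1 else 0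

/-- The character `e_k(x) = e^{2πikx}`. -/
noncomputable def eChar (k : ℕ) (x : ℝ) : ℂ :=
  Complex.exp (2 * Real.pi * Complex.I * (k : ℂ) * (x : ℂ))

/-- Riemann's non-differentiable function `R(x) = ∑_{k≥1} (σ_k/k) e^{2πikx}
    = ∑_{n≥1} e^{2πin²x}/n²`. -/
noncomputable def RiemannF (x : ℝ) : ℂ :=
  ∑' k : ℕ, ((sqIndicator k / k : ℝ) : ℂ) * eChar k x

/-- High-pass filter `R_{≥N}(x) = ∑_{k ≥ N} (σ_k/k) e^{2πikx}`. -/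
noncomputable def RiemannHigh (N : ℕ) (x : ℝ) : ℂ :=
  ∑' k : ℕ, if N ≤ k then ((sqIndicator k / k : ℝ) : ℂ) * eChar k x else 0

/-- The increment function `I(ℓ)(x) = 2i ∑_{k≥1} (sin(πkℓ)/k) σ_k e^{2πikx}`. -/
noncomputable def increment (ℓ : ℝ) (x : ℝ) : ℂ :=
  2 * Complex.I *
    ∑' k : ℕ, ((Real.sin (Real.pi * k * ℓ) / k * sqIndicator k : ℝ) : ℂ) * eChar k x

/-- The low-pass filtered increment
`I_{≤M}(ℓ)(x) = 2i ∑_{1 ≤ k ≤ M} (sin(πkℓ)/k) σ_k e^{2πikx}`. -/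
noncomputable def incrementLow (M ℓ : ℝ) (x : ℝ) : ℂ :=
  2 * Complex.I *
    ∑' k : ℕ, if 1 ≤ k ∧ (k : ℝ) ≤ M
      then ((Real.sin (Real.pi * k * ℓ) / k * sqIndicator k : ℝ) : ℂ) * eChar k x else 0

/-- The high-pass filtered increment
`I_{>M}(ℓ)(x) = 2i ∑_{k > M} (sin(πkℓ)/k) σ_k e^{2πikx}`. -/
noncomputable def incrementHigh (M ℓ : ℝ) (x : ℝ) : ℂ :=
  2 * Complex.I *
    ∑' k : ℕ, if M < (k : ℝ)
      then ((Real.sin (Real.pi * k * ℓ) / k * sqIndicator k : ℝ) : ℂ) * eChar k x else 0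

/-- The structure function `S_p(ℓ) = ∫₀¹ |R(x+ℓ) − R(x)|^p dx` (for natural `p`). -/
noncomputable def structureFn (p : ℕ) (ℓ : ℝ) : ℝ :=
  ∫ x in (0:ℝ)..1, ‖RiemannF (x + ℓ) - RiemannF x‖ ^ p

/-!
Both `I(ℓ)` and its truncation are absolutely convergent series `f = ∑ c_k e_k` with nonnegative
frequencies, so `f²` has Fourier coefficients `(c ⋆ c)_m = ∑_{i+j=m} c_i c_j` (`selfConv c m`), and
Parseval gives `‖f‖⁴_{L⁴} = ‖f²‖²_{L²} = ∑_m |(c ⋆ c)_m|²`.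
The coefficients of `I(ℓ)` are `2i·a_k` with `a_k = sin(πkℓ) σ_k / k ≥ 0` whenever `kℓ ≤ 1`.
For `m ≤ ℓ⁻¹` all products `a_i a_j` with `i + j = m` are nonnegative, so truncating the
frequencies at `ℓ⁻¹/2` can only decrease `|(a ⋆ a)_m|`; for `m > ℓ⁻¹` the truncated convolution
vanishes. The identity with `S₄` comes from `R(x + ℓ/2) − R(x − ℓ/2) = I(ℓ)(x)` and periodicity.
-/

open Complex in
lemma eChar_eq_exp (k : ℕ) (x : ℝ) : eChar k x = exp (((2 * π * k * x : ℝ) : ℂ) * I) := by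
  unfold eChar; push_cast; ring_nf

lemma norm_eChar (k : ℕ) (x : ℝ) : ‖eChar k x‖ = 1 := by
  rw [eChar_eq_exp, Complex.norm_exp_ofReal_mul_I]

lemma continuous_eChar (k : ℕ) : Continuous (eChar k) := by
  unfold eChar; fun_prop

lemma eChar_apply_add (k : ℕ) (x y : ℝ) : eChar k (x + y) = eChar k x * eChar k y := by
  unfold eChar; rw [← Complex.exp_add]; push_cast; ring_nf

lemma eChar_add (j k : ℕ) (x : ℝ) : eChar (j + k) x = eChar j x * eChar k x := by
  unfold eChar; rw [← Complex.exp_add]; push_cast; ring_nf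

lemma eChar_periodic (k : ℕ) : Function.Periodic (eChar k) 1 := by
  intro x
  have h1 : eChar k 1 = 1 := by
    rw [eChar, ← Complex.exp_nat_mul_two_pi_mul_I k]; push_cast; ring_nf
  rw [eChar_apply_add, h1, mul_one]

lemma conj_eChar (k : ℕ) (x : ℝ) : (starRingEnd ℂ) (eChar k x) = eChar k (-x) := by
  rw [eChar_eq_exp, eChar_eq_exp, ← Complex.exp_conj, map_mul, Complex.conj_I,
    Complex.conj_ofReal]
  push_cast; ring_nf

open Complex in
lemma eChar_add_half_sub_eChar_sub_half (k : ℕ) (x t : ℝ) :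
    eChar k (x + t / 2) - eChar k (x - t / 2) = 2 * I * Real.sin (π * k * t) * eChar k x := by
  rw [sub_eq_add_neg x, eChar_apply_add, eChar_apply_add, eChar_eq_exp k (t / 2),
    eChar_eq_exp k (-(t / 2)),
    show 2 * π * k * (t / 2) = π * k * t by ring,
    show 2 * π * k * -(t / 2) = -(π * k * t) by ring, exp_mul_I, exp_mul_I]
  push_cast
  rw [Complex.cos_neg, Complex.sin_neg]
  ring

lemma integral_eChar_mul_conj_eChar (m n : ℕ) :
    ∫ x in (0:ℝ)..1, eChar m x * (starRingEnd ℂ) (eChar n x) = if m = n then 1 else 0 := by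
  have hexp : ∀ x : ℝ, eChar m x * (starRingEnd ℂ) (eChar n x)
      = Complex.exp (2 * π * Complex.I * ((m : ℂ) - n) * x) := by
    intro x
    rw [conj_eChar, eChar, eChar, ← Complex.exp_add]
    push_cast; ring_nf
  simp_rw [hexp]
  split_ifs with h
  · simp [h]
  · have hmn : (m : ℂ) - n ≠ 0 := sub_ne_zero.mpr (by exact_mod_cast h)
    have hc : 2 * π * Complex.I * ((m : ℂ) - n) ≠ 0 := by
      simp [Real.pi_ne_zero, Complex.I_ne_zero, hmn]
    rw [integral_exp_mul_complex hc, ← Int.cast_natCast m, ← Int.cast_natCast n, ← Int.cast_sub]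
    simp only [Complex.ofReal_one, mul_one, Complex.ofReal_zero, mul_zero, Complex.exp_zero]
    rw [show 2 * π * Complex.I * ((m - n : ℤ) : ℂ) = (m - n : ℤ) * (2 * π * Complex.I) by ring,
      Complex.exp_int_mul_two_pi_mul_I, sub_self, zero_div]

def selfConv {R : Type*} [Semiring R] (c : ℕ → R) (m : ℕ) : R :=
  ∑ p ∈ Finset.HasAntidiagonal.antidiagonal m, c p.1 * c p.2

lemma selfConv_const_mul {R : Type*} [CommSemiring R] (z : R) (c : ℕ → R) (m : ℕ) :
    selfConv (fun k => z * c k) m = z ^ 2 * selfConv c m := by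
  simp only [selfConv, Finset.mul_sum]
  exact Finset.sum_congr rfl fun _ _ => by ring

lemma map_selfConv {R S : Type*} [Semiring R] [Semiring S] (f : R →+* S) (c : ℕ → R) (m : ℕ) :
    f (selfConv c m) = selfConv (f ∘ c) m := by
  simp only [selfConv, map_sum, map_mul, Function.comp_apply]

lemma abs_selfConv_indicator_le {a : ℕ → ℝ} {s : Set ℕ} {M : ℝ} (hs : ∀ k ∈ s, (k : ℝ) ≤ M)
    (ha : ∀ k : ℕ, (k : ℝ) ≤ 2 * M → 0 ≤ a k) (m : ℕ) :
    |selfConv (s.indicator a) m| ≤ |selfConv a m| := by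
  by_cases hm : (m : ℝ) ≤ 2 * M
  · have hle : ∀ p ∈ Finset.HasAntidiagonal.antidiagonal m, 0 ≤ a p.1 ∧ 0 ≤ a p.2 := by
      intro p hp
      have hp' : (p.1 : ℝ) + p.2 = m := by
        exact_mod_cast Finset.HasAntidiagonal.mem_antidiagonal.mp hp
      exact ⟨ha _ (by linarith [(p.2.cast_nonneg : (0 : ℝ) ≤ p.2)]),
        ha _ (by linarith [(p.1.cast_nonneg : (0 : ℝ) ≤ p.1)])⟩
    have hind : ∀ k, 0 ≤ a k → 0 ≤ s.indicator a k ∧ s.indicator a k ≤ a k := fun k hk =>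
      ⟨Set.indicator_apply_nonneg fun _ => hk,
        Set.indicator_apply_le' (fun _ => le_rfl) fun _ => hk⟩
    have hnonneg : 0 ≤ selfConv (s.indicator a) m := Finset.sum_nonneg fun p hp =>
      mul_nonneg (hind _ (hle p hp).1).1 (hind _ (hle p hp).2).1
    have hmono : selfConv (s.indicator a) m ≤ selfConv a m := Finset.sum_le_sum fun p hp =>
      mul_le_mul (hind _ (hle p hp).1).2 (hind _ (hle p hp).2).2 (hind _ (hle p hp).2).1
        (hle p hp).1
    rw [abs_of_nonneg hnonneg]
    exact hmono.trans (le_abs_self _)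
  · have hzero : selfConv (s.indicator a) m = 0 := Finset.sum_eq_zero fun p hp => by
      have hp' : (p.1 : ℝ) + p.2 = m := by
        exact_mod_cast Finset.HasAntidiagonal.mem_antidiagonal.mp hp
      rcases lt_or_ge M p.1 with h1 | h1
      · rw [Set.indicator_of_notMem (fun h => (hs _ h).not_gt h1), zero_mul]
      · have h2 : p.2 ∉ s := fun h => hm (by linarith [hs _ h])
        rw [Set.indicator_of_notMem h2, mul_zero]
    rw [hzero, abs_zero]
    exact abs_nonneg _

noncomputable def trigSeries (c : ℕ → ℂ) (x : ℝ) : ℂ := ∑' k, c k * eChar k x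

section TrigSeries

variable {c : ℕ → ℂ}

lemma norm_mul_eChar (c : ℕ → ℂ) (k : ℕ) (x : ℝ) : ‖c k * eChar k x‖ = ‖c k‖ := by
  rw [norm_mul, norm_eChar, mul_one]

lemma hasSum_trigSeries (hc : Summable fun k => ‖c k‖) (x : ℝ) :
    HasSum (fun k => c k * eChar k x) (trigSeries c x) :=
  (hc.congr fun k => (norm_mul_eChar c k x).symm).of_norm.hasSum

lemma norm_trigSeries_le (hc : Summable fun k => ‖c k‖) (x : ℝ) :
    ‖trigSeries c x‖ ≤ ∑' k, ‖c k‖ :=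
  (norm_tsum_le_tsum_norm (hc.congr fun k => (norm_mul_eChar c k x).symm)).trans_eq
    (tsum_congr fun k => norm_mul_eChar c k x)

lemma continuous_trigSeries (hc : Summable fun k => ‖c k‖) : Continuous (trigSeries c) :=
  continuous_tsum (fun k => continuous_const.mul (continuous_eChar k)) hc
    (fun k x => (norm_mul_eChar c k x).le)

lemma integral_trigSeries_mul_conj_eChar (hc : Summable fun k => ‖c k‖) (n : ℕ) :
    ∫ x in (0:ℝ)..1, trigSeries c x * (starRingEnd ℂ) (eChar n x) = c n := by
  have hsum : HasSum (fun k => ∫ x in (0:ℝ)..1, c k * (eChar k x * (starRingEnd ℂ) (eChar n x)))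
      (∫ x in (0:ℝ)..1, trigSeries c x * (starRingEnd ℂ) (eChar n x)) := by
    refine intervalIntegral.hasSum_integral_of_dominated_convergence (fun k _ => ‖c k‖)
      (fun k => ?_) (fun k => ?_) (ae_of_all _ fun _ _ => hc) intervalIntegrable_const
      (ae_of_all _ fun x _ => ?_)
    · exact (continuous_const.mul ((continuous_eChar k).mul
        (Complex.continuous_conj.comp (continuous_eChar n)))).aestronglyMeasurable
    · exact ae_of_all _ fun x _ => by simp [norm_eChar]
    · simpa only [mul_assoc] using (hasSum_trigSeries hc x).mul_right _
  simp only [intervalIntegral.integral_const_mul, integral_eChar_mul_conj_eChar, mul_ite,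
    mul_one, mul_zero] at hsum
  refine hsum.unique ?_
  convert hasSum_ite_eq n (c n) using 1
  ext k
  split_ifs with h <;> simp [h]

lemma hasSum_sq_norm_integral_sq_norm_trigSeries (hc : Summable fun k => ‖c k‖) :
    HasSum (fun k => ‖c k‖ ^ 2) (∫ x in (0:ℝ)..1, ‖trigSeries c x‖ ^ 2) := by
  rw [← Complex.hasSum_ofReal, ← intervalIntegral.integral_ofReal]
  have hsum : HasSum
      (fun k => ∫ x in (0:ℝ)..1,
        (starRingEnd ℂ) (c k) * (trigSeries c x * (starRingEnd ℂ) (eChar k x)))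
      (∫ x in (0:ℝ)..1, ((‖trigSeries c x‖ ^ 2 : ℝ) : ℂ)) := by
    refine intervalIntegral.hasSum_integral_of_dominated_convergence
      (fun k _ => ‖c k‖ * ∑' j, ‖c j‖) (fun k => ?_) (fun k => ?_)
      (ae_of_all _ fun _ _ => hc.mul_right _) intervalIntegrable_const
      (ae_of_all _ fun x _ => ?_)
    · exact (continuous_const.mul ((continuous_trigSeries hc).mul
        (Complex.continuous_conj.comp (continuous_eChar k)))).aestronglyMeasurable
    · refine ae_of_all _ fun x _ => ?_
      simp only [norm_mul, Complex.norm_conj, norm_eChar, mul_one]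
      exact mul_le_mul_of_nonneg_left (norm_trigSeries_le hc x) (norm_nonneg _)
    · have hconj :=
        (Complex.hasSum_conj'.mpr (hasSum_trigSeries hc x)).mul_right (trigSeries c x)
      rw [Complex.ofReal_pow, ← Complex.conj_mul']
      have hterm : ∀ k, (starRingEnd ℂ) (c k) * (trigSeries c x * (starRingEnd ℂ) (eChar k x))
          = (starRingEnd ℂ) (c k * eChar k x) * trigSeries c x := fun k => by rw [map_mul]; ring
      simpa only [hterm] using hconj
  simp only [intervalIntegral.integral_const_mul, integral_trigSeries_mul_conj_eChar hc,
    Complex.conj_mul'] at hsum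
  exact_mod_cast hsum

lemma trigSeries_sq (hc : Summable fun k => ‖c k‖) (x : ℝ) :
    trigSeries c x ^ 2 = trigSeries (selfConv c) x := by
  have hcx : Summable fun k => ‖c k * eChar k x‖ := hc.congr fun k => (norm_mul_eChar c k x).symm
  rw [sq, trigSeries, tsum_mul_tsum_eq_tsum_sum_antidiagonal_of_summable_norm hcx hcx]
  refine tsum_congr fun m => ?_
  rw [selfConv, Finset.sum_mul]
  refine Finset.sum_congr rfl fun p hp => ?_
  rw [← Finset.HasAntidiagonal.mem_antidiagonal.mp hp, eChar_add]
  ring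

lemma hasSum_sq_norm_selfConv_integral_pow_four (hc : Summable fun k => ‖c k‖) :
    HasSum (fun m => ‖selfConv c m‖ ^ 2) (∫ x in (0:ℝ)..1, ‖trigSeries c x‖ ^ 4) := by
  have hpow : ∀ x, ‖trigSeries c x‖ ^ 4 = ‖trigSeries (selfConv c) x‖ ^ 2 := fun x => by
    rw [← trigSeries_sq hc, norm_pow, ← pow_mul]
  simp only [hpow]
  exact hasSum_sq_norm_integral_sq_norm_trigSeries
    (summable_norm_sum_mul_antidiagonal_of_summable_norm hc hc)

end TrigSeries

lemma integral_norm_trigSeries_indicator_pow_four_le (z : ℂ) {a : ℕ → ℝ}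
    (ha : Summable fun k => ‖a k‖) {s : Set ℕ} {M : ℝ} (hs : ∀ k ∈ s, (k : ℝ) ≤ M)
    (hpos : ∀ k : ℕ, (k : ℝ) ≤ 2 * M → 0 ≤ a k) :
    ∫ x in (0:ℝ)..1, ‖trigSeries (fun k => z * s.indicator a k) x‖ ^ 4 ≤
      ∫ x in (0:ℝ)..1, ‖trigSeries (fun k => z * a k) x‖ ^ 4 := by
  have hnorm : ∀ b : ℕ → ℝ, ∀ m, ‖selfConv (fun k => z * b k) m‖ = ‖z‖ ^ 2 * |selfConv b m| :=
    fun b m => by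
      rw [selfConv_const_mul, norm_mul, norm_pow,
        show selfConv (fun k => (b k : ℂ)) m = Complex.ofRealHom (selfConv b m) from
          (map_selfConv Complex.ofRealHom b m).symm,
        Complex.ofRealHom_eq_coe, Complex.norm_real, Real.norm_eq_abs]
  have hsum : ∀ b : ℕ → ℝ, (∀ k, ‖b k‖ ≤ ‖a k‖) → Summable fun k => ‖z * b k‖ := fun b hb =>
    (ha.mul_left ‖z‖).of_nonneg_of_le (fun _ => norm_nonneg _) fun k => by
      rw [norm_mul, Complex.norm_real]
      exact mul_le_mul_of_nonneg_left (hb k) (norm_nonneg z)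
  refine hasSum_le (fun m => ?_)
    (hasSum_sq_norm_selfConv_integral_pow_four (hsum _ fun k => norm_indicator_le_norm_self _ _))
    (hasSum_sq_norm_selfConv_integral_pow_four (hsum a fun _ => le_rfl))
  rw [hnorm, hnorm]
  exact pow_le_pow_left₀ (by positivity)
    (mul_le_mul_of_nonneg_left (abs_selfConv_indicator_le hs hpos m) (by positivity)) 2

lemma sqIndicator_nonneg (k : ℕ) : 0 ≤ sqIndicator k := by
  unfold sqIndicator; split_ifs <;> norm_num

lemma summable_sqIndicator_div : Summable fun k : ℕ => sqIndicator k / k := by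
  have hsq : Function.Injective fun n : ℕ => n ^ 2 := Nat.pow_left_injective two_ne_zero
  rw [← hsq.summable_iff fun k hk => ?_]
  · refine (Real.summable_one_div_nat_pow.mpr one_lt_two).congr fun n => ?_
    simp [sqIndicator, IsSquare.sq n]
  · have : ¬IsSquare k := fun ⟨r, hr⟩ => hk ⟨r, by rw [hr]; exact sq r⟩
    simp [sqIndicator, this]

noncomputable def incrementCoeff (ℓ : ℝ) (k : ℕ) : ℝ := Real.sin (π * k * ℓ) / k * sqIndicator k

lemma summable_norm_incrementCoeff (ℓ : ℝ) : Summable fun k => ‖incrementCoeff ℓ k‖ := by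
  refine summable_sqIndicator_div.of_nonneg_of_le (fun _ => norm_nonneg _) fun k => ?_
  rw [incrementCoeff, Real.norm_eq_abs, abs_mul, abs_div, Nat.abs_cast,
    abs_of_nonneg (sqIndicator_nonneg k), div_mul_eq_mul_div]
  exact div_le_div_of_nonneg_right
    (mul_le_of_le_one_left (sqIndicator_nonneg k) (Real.abs_sin_le_one _)) k.cast_nonneg

lemma incrementCoeff_nonneg {ℓ : ℝ} (hℓ : 0 ≤ ℓ) {k : ℕ} (hk : k * ℓ ≤ 1) :
    0 ≤ incrementCoeff ℓ k := by
  refine mul_nonneg (div_nonneg (Real.sin_nonneg_of_nonneg_of_le_pi (by positivity) ?_)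
    k.cast_nonneg) (sqIndicator_nonneg k)
  calc π * k * ℓ = π * (k * ℓ) := by ring
    _ ≤ π := mul_le_of_le_one_right Real.pi_pos.le hk

lemma increment_eq_trigSeries (ℓ : ℝ) :
    increment ℓ = trigSeries fun k => 2 * Complex.I * incrementCoeff ℓ k := by
  ext x
  rw [increment, trigSeries, ← tsum_mul_left]
  exact tsum_congr fun k => by rw [incrementCoeff]; ring

lemma incrementLow_eq_trigSeries (M ℓ : ℝ) :
    incrementLow M ℓ = trigSeries fun k =>
      2 * Complex.I * {k : ℕ | 1 ≤ k ∧ (k : ℝ) ≤ M}.indicator (incrementCoeff ℓ) k := by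
  ext x
  rw [incrementLow, trigSeries, ← tsum_mul_left]
  refine tsum_congr fun k => ?_
  simp only [Set.indicator_apply, Set.mem_ofPred_eq]
  split_ifs <;> simp [incrementCoeff, mul_assoc]

lemma RiemannF_add_half_sub_RiemannF_sub_half (ℓ x : ℝ) :
    RiemannF (x + ℓ / 2) - RiemannF (x - ℓ / 2) = increment ℓ x := by
  have hR : Summable fun k : ℕ => ‖((sqIndicator k / k : ℝ) : ℂ)‖ := by
    refine summable_sqIndicator_div.congr fun k => ?_
    rw [Complex.norm_real, Real.norm_eq_abs,
      abs_of_nonneg (div_nonneg (sqIndicator_nonneg k) k.cast_nonneg)]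
  rw [RiemannF, RiemannF, ← (hasSum_trigSeries hR _).summable.tsum_sub
    (hasSum_trigSeries hR _).summable, increment, ← tsum_mul_left]
  refine tsum_congr fun k => ?_
  rw [← mul_sub, eChar_add_half_sub_eChar_sub_half]
  push_cast
  ring

lemma increment_periodic (ℓ : ℝ) : Function.Periodic (increment ℓ) 1 := fun x => by
  simp only [increment, eChar_periodic _ x]

lemma integral_norm_increment_pow_eq_structureFn (p : ℕ) (ℓ : ℝ) :
    ∫ x in (0:ℝ)..1, ‖increment ℓ x‖ ^ p = structureFn p ℓ := by
  have hper : Function.Periodic (fun x => ‖increment ℓ x‖ ^ p) 1 := fun x => by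
    simp only [increment_periodic ℓ x]
  calc ∫ x in (0:ℝ)..1, ‖increment ℓ x‖ ^ p
      = ∫ x in (0:ℝ)..(0 + 1), ‖increment ℓ x‖ ^ p := by rw [zero_add]
    _ = ∫ x in (ℓ / 2)..(ℓ / 2 + 1), ‖increment ℓ x‖ ^ p := hper.intervalIntegral_add_eq 0 _
    _ = ∫ x in (0:ℝ)..1, ‖increment ℓ (x + ℓ / 2)‖ ^ p := by
      rw [intervalIntegral.integral_comp_add_right (fun x => ‖increment ℓ x‖ ^ p), zero_add,
        add_comm]
    _ = structureFn p ℓ := by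
      refine intervalIntegral.integral_congr fun x _ => ?_
      rw [← RiemannF_add_half_sub_RiemannF_sub_half, add_sub_cancel_right, add_assoc, add_halves]

/-- For every `0 < ℓ < 1`,
`‖I_{≤ℓ⁻¹/2}(ℓ)‖_{L⁴(𝕋)}⁴ ≤ ‖I(ℓ)‖_{L⁴(𝕋)}⁴ = S₄(ℓ)`. -/
theorem riemann_increment_low_le_S4 :
    ∀ ℓ : ℝ, 0 < ℓ → ℓ < 1 →
      (∫ x in (0:ℝ)..1, ‖incrementLow (ℓ⁻¹ / 2) ℓ x‖ ^ 4) ≤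
        (∫ x in (0:ℝ)..1, ‖increment ℓ x‖ ^ 4) ∧
      (∫ x in (0:ℝ)..1, ‖increment ℓ x‖ ^ 4) = structureFn 4 ℓ := by
  intro ℓ hℓ _
  refine ⟨?_, integral_norm_increment_pow_eq_structureFn 4 ℓ⟩
  rw [increment_eq_trigSeries, incrementLow_eq_trigSeries]
  refine integral_norm_trigSeries_indicator_pow_four_le _ (summable_norm_incrementCoeff ℓ)
    (fun k hk => hk.2) fun k hk => incrementCoeff_nonneg hℓ.le ?_
  calc (k : ℝ) * ℓ ≤ ℓ⁻¹ * ℓ := by gcongr; linarith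
    _ = 1 := inv_mul_cancel₀ hℓ.ne'
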